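/- arXiv:2310.16910 — 6 statements merged into one kernel-verified Lean document; each statement's English description precedes it below -/
import Mathlib

section
/- Let U ⊆ ℝ^m be unbounded, let F : U → ℝ^m be p-quasi sharp over U relative to a nonempty compact solution set U* with p > 2 and modulus μ > 0 (i.e., ⟨F(u), u - u*⟩ ≥ μ·dist(u, U*)^p for all u ∈ U, u* ∈ U*). Then F does not have linear growth on U, i.e., there do not exist constants C, D ≥ 0 with ‖F(u)‖ ≤ C‖u‖ + D for all u ∈ U. -/
/-!
Let `d = dist(u, U*)`, attained at `u* ∈ U*`, and let `R` bound `U*`, so that `‖u‖ ≤ d + R`.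
Quasi sharpness, Cauchy–Schwarz and linear growth give
`μ d^p ≤ ⟨F u, u - u*⟩ ≤ ‖F u‖ d ≤ (C (d + R) + D) d`,
a quadratic bound on `d ^ p` with `p > 2`. Since `U` is unbounded and `U*` is bounded,
`d` can be taken arbitrarily large, which is impossible.
-/

open Filter Metric

theorem eventually_mul_add_mul_lt_mul_rpow {q μ : ℝ} (hq : 2 < q) (hμ : 0 < μ) (a b : ℝ) :
    ∀ᶠ d in atTop, (a * d + b) * d < μ * d ^ q := by
  have hlarge : ∀ᶠ d : ℝ in atTop, (|a| + |b|) / μ < d ^ (q - 2) :=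
    (tendsto_rpow_atTop (by linarith)).eventually_gt_atTop _
  filter_upwards [hlarge, eventually_ge_atTop 1] with d hd hd1
  have hd0 : 0 < d := by linarith
  have hlin : a * d + b ≤ (|a| + |b|) * d := by
    nlinarith [le_abs_self a, le_abs_self b, abs_nonneg b]
  calc (a * d + b) * d ≤ (|a| + |b|) * d * d := by gcongr
    _ < μ * d ^ (q - 2) * d * d := by
        rw [div_lt_iff₀' hμ] at hd
        gcongr
    _ = μ * d ^ q := by
        rw [mul_assoc, mul_assoc, ← sq, ← Real.rpow_two, ← Real.rpow_add hd0, sub_add_cancel]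

section Normed

variable {E : Type*} [SeminormedAddCommGroup E]

theorem norm_le_infDist_add {S : Set E} {R : ℝ} (hne : S.Nonempty) (hR : ∀ s ∈ S, ‖s‖ ≤ R)
    (u : E) : ‖u‖ ≤ infDist u S + R := by
  have : ‖u‖ - R ≤ infDist u S := by
    refine (le_infDist hne).2 fun s hs => ?_
    rw [dist_eq_norm]
    linarith [norm_sub_norm_le u s, hR s hs]
  linarith

theorem exists_mem_le_infDist_of_not_isBounded {U S : Set E} {R : ℝ}
    (hU : ¬ Bornology.IsBounded U) (hne : S.Nonempty) (hR : ∀ s ∈ S, ‖s‖ ≤ R) (t : ℝ) :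
    ∃ u ∈ U, t ≤ infDist u S := by
  by_contra! h
  refine hU (isBounded_iff_forall_norm_le.2 ⟨t + R, fun u hu => ?_⟩)
  linarith [norm_le_infDist_add hne hR u, h u hu]

end Normed

theorem p_quasi_sharp_no_linear_growth_general (m : ℕ)
    (U Ustar : Set (EuclideanSpace ℝ (Fin m)))
    (hU : ¬ Bornology.IsBounded U)
    (hne : Ustar.Nonempty) (hcomp : IsCompact Ustar)
    (F : EuclideanSpace ℝ (Fin m) → EuclideanSpace ℝ (Fin m))
    (p μ : ℝ) (hp : 2 < p) (hμ : 0 < μ)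
    (hsharp : ∀ u ∈ U, ∀ ustar ∈ Ustar,
      μ * (Metric.infDist u Ustar) ^ p ≤ (inner ℝ (F u) (u - ustar) : ℝ)) :
    ¬ ∃ C D : ℝ, 0 ≤ C ∧ 0 ≤ D ∧ ∀ u ∈ U, ‖F u‖ ≤ C * ‖u‖ + D := by
  rintro ⟨C, D, hC, -, hlin⟩
  obtain ⟨R, hR⟩ := isBounded_iff_forall_norm_le.1 hcomp.isBounded
  obtain ⟨d₀, hd₀⟩ :=
    eventually_atTop.1 (eventually_mul_add_mul_lt_mul_rpow hp hμ C (C * R + D))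
  obtain ⟨u, hu, hd⟩ := exists_mem_le_infDist_of_not_isBounded hU hne hR d₀
  obtain ⟨v, hv, hdist⟩ := hcomp.exists_infDist_eq_dist hne u
  set d := infDist u Ustar
  have hnorm_sub : ‖u - v‖ = d := by rw [hdist, dist_eq_norm]
  have hnorm : ‖u‖ ≤ d + R := norm_le_infDist_add hne hR u
  refine (hd₀ d hd).not_ge ?_
  calc μ * d ^ p ≤ inner ℝ (F u) (u - v) := hsharp u hu v hv
    _ ≤ ‖F u‖ * ‖u - v‖ := real_inner_le_norm _ _
    _ ≤ (C * ‖u‖ + D) * d := by rw [hnorm_sub]; gcongr; exacts [infDist_nonneg, hlin u hu]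
    _ ≤ (C * (d + R) + D) * d := by gcongr; exact infDist_nonneg
    _ = (C * d + (C * R + D)) * d := by ring

/-- A `p`-quasi sharp operator with `p > 2` over an unbounded set, relative to a nonempty
compact solution set, cannot have linear growth. -/
theorem p_quasi_sharp_no_linear_growth (m : ℕ)
    (U Ustar : Set (EuclideanSpace ℝ (Fin m)))
    (hU : ¬ Bornology.IsBounded U)
    (hUstarU : Ustar ⊆ U) (hne : Ustar.Nonempty) (hcomp : IsCompact Ustar)
    (F : EuclideanSpace ℝ (Fin m) → EuclideanSpace ℝ (Fin m))
    (p μ : ℝ) (hp : 2 < p) (hμ : 0 < μ)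
    (hsharp : ∀ u ∈ U, ∀ ustar ∈ Ustar,
      μ * (Metric.infDist u Ustar) ^ p ≤ (inner ℝ (F u) (u - ustar) : ℝ)) :
    ¬ ∃ C D : ℝ, 0 ≤ C ∧ 0 ≤ D ∧ ∀ u ∈ U, ‖F u‖ ≤ C * ‖u‖ + D :=
  p_quasi_sharp_no_linear_growth_general m U Ustar hU hne hcomp F p μ hp hμ hsharp
end

section
/- Let p ≥ 1 and define F : ℝ² → ℝ² by F(u) = c(u)·(sign(u₁)|u₁|^{p-1} + u₂, sign(u₂)|u₂|^{p-1} - u₁), where c(u) = 2 if ‖u‖ ≤ 1 and c(u) = 1 if ‖u‖ > 1. Then for all u ∈ ℝ², ⟨F(u), u⟩ ≥ 2^{1-p}·‖u‖^p. -/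
/-! The rotation part `(u₂, -u₁)` of `F` is orthogonal to `u`, so `⟨F u, u⟩ = c u * (|u₁|^p + |u₂|^p)`
with `c u ≥ 1`. The power-mean inequality `(a + b)^p ≤ 2^(p-1) (a^p + b^p)` together with
`‖u‖ ≤ |u₁| + |u₂|` bounds this below by `2^(1-p) ‖u‖^p`. -/

open Real

namespace Real

lemma sign_mul_self (x : ℝ) : sign x * x = |x| := by
  rcases lt_trichotomy x 0 with hx | rfl | hx
  · rw [sign_of_neg hx, abs_of_neg hx, neg_one_mul]
  · simp
  · rw [sign_of_pos hx, abs_of_pos hx, one_mul]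

lemma sign_mul_abs_rpow_sub_one_mul_self {p : ℝ} (hp : p ≠ 0) (x : ℝ) :
    sign x * |x| ^ (p - 1) * x = |x| ^ p := by
  rw [mul_comm (sign x), mul_assoc, sign_mul_self,
    ← rpow_add_one' (abs_nonneg x) (by simpa using hp), sub_add_cancel]

lemma rpow_add_le_mul_rpow_add_rpow {p a b : ℝ} (ha : 0 ≤ a) (hb : 0 ≤ b) (hp : 1 ≤ p) :
    (a + b) ^ p ≤ 2 ^ (p - 1) * (a ^ p + b ^ p) := by
  exact_mod_cast NNReal.rpow_add_le_mul_rpow_add_rpow ⟨a, ha⟩ ⟨b, hb⟩ hp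

end Real

lemma EuclideanSpace.norm_le_sum_norm {𝕜 ι : Type*} [RCLike 𝕜] [Fintype ι]
    (x : EuclideanSpace 𝕜 ι) : ‖x‖ ≤ ∑ i, ‖x i‖ := by
  classical
  calc ‖x‖ = ‖∑ i, EuclideanSpace.single i (x i)‖ := by
        congr 1; ext j; simp
    _ ≤ ∑ i, ‖EuclideanSpace.single i (x i)‖ := norm_sum_le _ _
    _ = ∑ i, ‖x i‖ := by simp

lemma inner_eq_mul_rpow_add_rpow {p k : ℝ} (hp : p ≠ 0) {u v : EuclideanSpace ℝ (Fin 2)}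
    (h0 : v 0 = k * (sign (u 0) * |u 0| ^ (p - 1) + u 1))
    (h1 : v 1 = k * (sign (u 1) * |u 1| ^ (p - 1) - u 0)) :
    inner ℝ v u = k * (|u 0| ^ p + |u 1| ^ p) := by
  simp only [PiLp.inner_apply, Fin.sum_univ_two, RCLike.inner_apply, conj_trivial, h0, h1,
    ← sign_mul_abs_rpow_sub_one_mul_self hp (u 0), ← sign_mul_abs_rpow_sub_one_mul_self hp (u 1)]
  ring

/-- The operator of Example 1 is `p`-quasi sharp with constant `μ = 2^(1-p)`
relative to the unique solution `0`. -/
theorem example_operator_p_quasi_sharp (p : ℝ) (hp : 1 ≤ p)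
    (c : EuclideanSpace ℝ (Fin 2) → ℝ)
    (hc : ∀ u, c u = if ‖u‖ ≤ 1 then 2 else 1)
    (F : EuclideanSpace ℝ (Fin 2) → EuclideanSpace ℝ (Fin 2))
    (hF0 : ∀ u, F u 0 = c u * (Real.sign (u 0) * |u 0| ^ (p - 1) + u 1))
    (hF1 : ∀ u, F u 1 = c u * (Real.sign (u 1) * |u 1| ^ (p - 1) - u 0)) :
    ∀ u : EuclideanSpace ℝ (Fin 2),
      (2 : ℝ) ^ (1 - p) * ‖u‖ ^ p ≤ (inner ℝ (F u) u : ℝ) := by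
  intro u
  have hcu : 1 ≤ c u := by rw [hc]; split_ifs <;> norm_num
  have hnorm : ‖u‖ ≤ |u 0| + |u 1| := by
    simpa [Fin.sum_univ_two] using EuclideanSpace.norm_le_sum_norm u
  calc (2 : ℝ) ^ (1 - p) * ‖u‖ ^ p
      ≤ 2 ^ (1 - p) * (|u 0| + |u 1|) ^ p := by gcongr
    _ ≤ 2 ^ (1 - p) * (2 ^ (p - 1) * (|u 0| ^ p + |u 1| ^ p)) := by
        gcongr; exact rpow_add_le_mul_rpow_add_rpow (abs_nonneg _) (abs_nonneg _) hp
    _ = |u 0| ^ p + |u 1| ^ p := by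
        rw [← mul_assoc, ← rpow_add two_pos, sub_add_sub_cancel', sub_self, rpow_zero, one_mul]
    _ ≤ c u * (|u 0| ^ p + |u 1| ^ p) := le_mul_of_one_le_left (by positivity) hcu
    _ = inner ℝ (F u) u := (inner_eq_mul_rpow_add_rpow (by positivity) (hF0 u) (hF1 u)).symm
end

section
/- Let p > 1 and define F : ℝ² → ℝ² by F(u) = c(u)·(sign(u₁)|u₁|^{p-1} + u₂, sign(u₂)|u₂|^{p-1} - u₁) with c as above. Then F is not monotone on ℝ²: there exist u, v ∈ ℝ² with ⟨F(u) - F(v), u - v⟩ < 0. In particular one may take u = (0,1) and v = (0, 1 + 1/(5(p-1))). -/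
/-!
On the positive `u₂`-axis the operator is `F (0, s) = c (0, s) • (s, s ^ (p - 1))`, so only
second components enter the pairing of two such points. The factor `c` drops from `2` to `1`
across the unit circle, so the second component falls from `2` at `s = 1` to
`t ^ (p - 1) < 2` at `s = t = 1 + 1 / (5 (p - 1)) > 1`, while `s` itself increases.
-/

open Real

lemma Real.one_add_div_rpow_le_exp {x r : ℝ} (hr : 0 < r) (hx : -r ≤ x) :
    (1 + x / r) ^ r ≤ exp x := by
  have hxr : -1 ≤ x / r := by rwa [le_div_iff₀ hr, neg_one_mul]
  calc (1 + x / r) ^ r ≤ exp (x / r) ^ r := by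
        gcongr
        · linarith
        · linarith [add_one_le_exp (x / r)]
    _ = exp x := by rw [← exp_mul, div_mul_cancel₀ x hr.ne']

lemma Real.one_add_one_div_five_mul_rpow_lt_two {r : ℝ} (hr : 0 < r) :
    (1 + 1 / (5 * r)) ^ r < 2 := by
  calc (1 + 1 / (5 * r)) ^ r = (1 + (1 / 5) / r) ^ r := by rw [div_div]
    _ ≤ exp (1 / 5) := one_add_div_rpow_le_exp hr (by linarith)
    _ < exp (log 2) := exp_lt_exp.2 (by linarith [log_two_gt_d9])
    _ = 2 := exp_log two_pos

namespace EuclideanSpace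

lemma norm_zero_cons (s : ℝ) : ‖!₂[0, s]‖ = |s| := by
  simp [EuclideanSpace.norm_eq, Fin.sum_univ_two, Real.sqrt_sq_eq_abs]

lemma inner_zero_cons_sub_zero_cons (x : EuclideanSpace ℝ (Fin 2)) (a b : ℝ) :
    inner ℝ x (!₂[0, a] - !₂[0, b]) = x 1 * (a - b) := by
  simp [PiLp.inner_apply, Fin.sum_univ_two, mul_comm]

end EuclideanSpace

theorem example_operator_not_monotone_general (p : ℝ) (hp : 1 < p)
    (c : EuclideanSpace ℝ (Fin 2) → ℝ)
    (hc : ∀ u, c u = if ‖u‖ ≤ 1 then 2 else 1)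
    (F : EuclideanSpace ℝ (Fin 2) → EuclideanSpace ℝ (Fin 2))
    (hF1 : ∀ u, F u 1 = c u * (Real.sign (u 1) * |u 1| ^ (p - 1) - u 0)) :
    ∃ u v : EuclideanSpace ℝ (Fin 2), (inner ℝ (F u - F v) (u - v) : ℝ) < 0 := by
  have hp1 : 0 < p - 1 := sub_pos.2 hp
  set t := 1 + 1 / (5 * (p - 1))
  have ht : 1 < t := lt_add_of_pos_right 1 (by positivity)
  have hF_axis : ∀ s > 0, F !₂[0, s] 1 = c !₂[0, s] * s ^ (p - 1) := fun s hs => by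
    simp [hF1, sign_of_pos hs, abs_of_pos hs]
  have hc_one : c !₂[0, 1] = 2 := by simp [hc, EuclideanSpace.norm_zero_cons]
  have hc_t : c !₂[0, t] = 1 := by
    rw [hc, EuclideanSpace.norm_zero_cons, abs_of_pos (by linarith), if_neg ht.not_ge]
  refine ⟨!₂[0, 1], !₂[0, t], ?_⟩
  rw [EuclideanSpace.inner_zero_cons_sub_zero_cons, PiLp.sub_apply, hF_axis 1 one_pos,
    hF_axis t (by linarith), hc_one, hc_t, one_rpow]
  have ht_pow := one_add_one_div_five_mul_rpow_lt_two hp1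
  exact mul_neg_of_pos_of_neg (by linarith) (by linarith)

/-- The operator of Example 1 is not monotone for `p > 1`. -/
theorem example_operator_not_monotone (p : ℝ) (hp : 1 < p)
    (c : EuclideanSpace ℝ (Fin 2) → ℝ)
    (hc : ∀ u, c u = if ‖u‖ ≤ 1 then 2 else 1)
    (F : EuclideanSpace ℝ (Fin 2) → EuclideanSpace ℝ (Fin 2))
    (hF0 : ∀ u, F u 0 = c u * (Real.sign (u 0) * |u 0| ^ (p - 1) + u 1))
    (hF1 : ∀ u, F u 1 = c u * (Real.sign (u 1) * |u 1| ^ (p - 1) - u 0)) :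
    ∃ u v : EuclideanSpace ℝ (Fin 2), (inner ℝ (F u - F v) (u - v) : ℝ) < 0 :=
  example_operator_not_monotone_general p hp c hc F hF1
end

section
/- Let p ∈ (0,2) ∪ (2,∞) and F : ℝ² → ℝ² be as in Example 1 (F(u) = c(u)·(sign(u₁)|u₁|^{p-1} + u₂, sign(u₂)|u₂|^{p-1} - u₁)). Then F is not quasi-strongly monotone: there is no μ > 0 such that ⟨F(u), u⟩ ≥ μ‖u‖² for all u ∈ ℝ². -/
/-! Along the ray `u = (t, 0)`, `t > 0`, one has `‖u‖ = t` and `⟨F u, u⟩ = c(u) t ^ p ≤ 2 t ^ p`.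
Quasi-strong monotonicity would then give `μ ≤ 2 t ^ (p - 2)` for all `t > 0`, which fails as
`t → ∞` when `p < 2` and as `t → 0` when `p > 2`. -/

open Real

theorem not_forall_le_mul_rpow {q μ : ℝ} (hq : q ≠ 0) (hμ : 0 < μ) (C : ℝ) :
    ¬ ∀ t : ℝ, 0 < t → μ ≤ C * t ^ q := by
  intro h
  have hC : 0 < |C| + 1 := by positivity
  set s : ℝ := (μ / (|C| + 1)) ^ q⁻¹
  have hs : s ^ q = μ / (|C| + 1) := rpow_inv_rpow (by positivity) hq
  have hμs := h s (by positivity)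
  rw [hs] at hμs
  have : C * (μ / (|C| + 1)) < μ := by
    rw [mul_div_assoc', div_lt_iff₀ hC]
    nlinarith [le_abs_self C]
  linarith

theorem not_forall_mul_rpow_le_mul_rpow {p r μ : ℝ} (hpr : p ≠ r) (hμ : 0 < μ) (C : ℝ) :
    ¬ ∀ t : ℝ, 0 < t → μ * t ^ r ≤ C * t ^ p := by
  refine fun h ↦ not_forall_le_mul_rpow (sub_ne_zero.2 hpr) hμ C fun t ht ↦ ?_
  rw [rpow_sub ht, mul_div_assoc', le_div_iff₀ (rpow_pos_of_pos ht r)]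
  exact h t ht

theorem inner_single_zero_self_eq {p : ℝ} {c : EuclideanSpace ℝ (Fin 2) → ℝ}
    {F : EuclideanSpace ℝ (Fin 2) → EuclideanSpace ℝ (Fin 2)}
    (hF0 : ∀ u, F u 0 = c u * (Real.sign (u 0) * |u 0| ^ (p - 1) + u 1)) {t : ℝ} (ht : 0 < t) :
    (inner ℝ (F (EuclideanSpace.single 0 t)) (EuclideanSpace.single 0 t) : ℝ) =
      c (EuclideanSpace.single 0 t) * t ^ p := by
  rw [EuclideanSpace.inner_single_right, hF0]
  simp only [PiLp.single_apply, if_true, one_ne_zero, if_false, sign_of_pos ht,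
    abs_of_pos ht, conj_trivial, add_zero, one_mul]
  rw [rpow_sub_one ht.ne']
  field_simp

theorem example_operator_not_quasi_strongly_monotone_general (p : ℝ) (hp2 : p ≠ 2)
    (c : EuclideanSpace ℝ (Fin 2) → ℝ)
    (hc : ∀ u, c u = if ‖u‖ ≤ 1 then 2 else 1)
    (F : EuclideanSpace ℝ (Fin 2) → EuclideanSpace ℝ (Fin 2))
    (hF0 : ∀ u, F u 0 = c u * (Real.sign (u 0) * |u 0| ^ (p - 1) + u 1)) :
    ¬ ∃ μ : ℝ, 0 < μ ∧ ∀ u : EuclideanSpace ℝ (Fin 2),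
        μ * ‖u‖ ^ 2 ≤ (inner ℝ (F u) u : ℝ) := by
  rintro ⟨μ, hμ, h⟩
  refine not_forall_mul_rpow_le_mul_rpow hp2 hμ 2 fun t ht ↦ ?_
  have hc2 : c (EuclideanSpace.single 0 t) ≤ 2 := by
    rw [hc]
    split_ifs <;> norm_num
  calc μ * t ^ (2 : ℝ) = μ * ‖EuclideanSpace.single (0 : Fin 2) t‖ ^ 2 := by
        rw [PiLp.norm_single, norm_of_nonneg ht.le, rpow_two]
    _ ≤ c (EuclideanSpace.single 0 t) * t ^ p := by
        rw [← inner_single_zero_self_eq hF0 ht]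
        exact h _
    _ ≤ 2 * t ^ p := by gcongr

/-- The operator of Example 1 is not quasi-strongly monotone for any `p ∈ (0,2) ∪ (2,∞)`. -/
theorem example_operator_not_quasi_strongly_monotone (p : ℝ) (hp : 0 < p) (hp2 : p ≠ 2)
    (c : EuclideanSpace ℝ (Fin 2) → ℝ)
    (hc : ∀ u, c u = if ‖u‖ ≤ 1 then 2 else 1)
    (F : EuclideanSpace ℝ (Fin 2) → EuclideanSpace ℝ (Fin 2))
    (hF0 : ∀ u, F u 0 = c u * (Real.sign (u 0) * |u 0| ^ (p - 1) + u 1))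
    (hF1 : ∀ u, F u 1 = c u * (Real.sign (u 1) * |u 1| ^ (p - 1) - u 0)) :
    ¬ ∃ μ : ℝ, 0 < μ ∧ ∀ u : EuclideanSpace ℝ (Fin 2),
        μ * ‖u‖ ^ 2 ≤ (inner ℝ (F u) u : ℝ) :=
  example_operator_not_quasi_strongly_monotone_general p hp2 c hc F hF0
end

section
/- (Main recursion of Lemma 1) Let U ⊆ ℝ^m be closed convex with projection P_U. Given points u_k, h_{k-1}, h_k ∈ U, stepsize α_k > 0, and vectors Φ_{k-1}, Φ_k ∈ ℝ^m, suppose h_k = P_U(u_k - α_k·Φ_{k-1}) and u_{k+1} = P_U(u_k - α_k·Φ_k). Then for all y ∈ U: ‖u_{k+1} - y‖² ≤ ‖u_k - y‖² - ‖u_{k+1} - h_k‖² - ‖u_k - h_k‖² - 2α_k⟨Φ_k, h_k - y⟩ + 2α_k²‖Φ_k - Φ_{k-1}‖². -/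
/-!
Write `u⁺ = P_U(u - αΦ)`, `h = P_U(u - αΦ')`. The variational inequality of the projection,
`⟪v - P v, w - P v⟫ ≤ 0` for `w ∈ U`, read through the polarization identity, gives the three-point
inequality `‖P(x - αg) - w‖² ≤ ‖x - w‖² - ‖x - P(x - αg)‖² + 2α⟪g, w - P(x - αg)⟫`. Used once for
`u⁺` against `y` and once for `h` against `u⁺`, and added up, it leaves the cross term
`2α⟪Φ - Φ', h - u⁺⟫`, which is at most `2α²‖Φ - Φ'‖²` because the projection is nonexpansive.
-/

open RealInnerProductSpace

variable {E : Type*} [NormedAddCommGroup E] [InnerProductSpace ℝ E]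

structure IsNearestPointMap (U : Set E) (P : E → E) : Prop where
  mem : ∀ v, P v ∈ U
  norm_sub_le : ∀ v, ∀ w ∈ U, ‖P v - v‖ ≤ ‖w - v‖

namespace IsNearestPointMap

variable {U : Set E} {P : E → E}

theorem inner_sub_le_zero (hU : Convex ℝ U) (hP : IsNearestPointMap U P) (v : E) :
    ∀ w ∈ U, ⟪v - P v, w - P v⟫ ≤ 0 := by
  have : Nonempty U := ⟨⟨P v, hP.mem v⟩⟩
  refine (norm_eq_iInf_iff_real_inner_le_zero hU (hP.mem v)).mp (le_antisymm ?_ ?_)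
  · exact le_ciInf fun w => by simpa only [norm_sub_rev v] using hP.norm_sub_le v w w.2
  · exact ciInf_le ⟨0, Set.forall_mem_range.2 fun _ => norm_nonneg _⟩ (⟨P v, hP.mem v⟩ : U)

theorem norm_sub_le_norm_sub (hU : Convex ℝ U) (hP : IsNearestPointMap U P) (a b : E) :
    ‖P a - P b‖ ≤ ‖a - b‖ := by
  have ha := hP.inner_sub_le_zero hU a (P b) (hP.mem b)
  have hb := hP.inner_sub_le_zero hU b (P a) (hP.mem a)
  have hsq : ‖P a - P b‖ ^ 2 ≤ ⟪a - b, P a - P b⟫ := by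
    rw [← real_inner_self_eq_norm_sq]
    simp only [inner_sub_left, inner_sub_right, real_inner_comm] at ha hb ⊢
    linarith
  have hcs := real_inner_le_norm (a - b) (P a - P b)
  nlinarith [norm_nonneg (P a - P b), norm_nonneg (a - b)]

theorem norm_sub_sq_le (hU : Convex ℝ U) (hP : IsNearestPointMap U P) (x g : E) (α : ℝ)
    {w : E} (hw : w ∈ U) :
    ‖P (x - α • g) - w‖ ^ 2 ≤
      ‖x - w‖ ^ 2 - ‖x - P (x - α • g)‖ ^ 2 + 2 * α * ⟪g, w - P (x - α • g)⟫ := by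
  set z := P (x - α • g)
  have hvar := hP.inner_sub_le_zero hU (x - α • g) w hw
  have hpol : 2 * ⟪x - z, w - z⟫ = ‖x - z‖ ^ 2 + ‖w - z‖ ^ 2 - ‖x - w‖ ^ 2 := by
    rw [show x - w = (x - z) - (w - z) by abel, norm_sub_sq_real (x - z) (w - z)]
    ring
  rw [sub_right_comm, inner_sub_left, real_inner_smul_left] at hvar
  rw [norm_sub_rev z w]
  linarith

end IsNearestPointMap

theorem mul_inner_le_sq_mul_norm_sq {d e : E} {α : ℝ} (h : ‖e‖ ≤ |α| * ‖d‖) :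
    α * ⟪d, e⟫ ≤ α ^ 2 * ‖d‖ ^ 2 :=
  calc α * ⟪d, e⟫ ≤ |α| * (‖d‖ * ‖e‖) :=
        (le_abs_self _).trans (by rw [abs_mul]; gcongr; exact abs_real_inner_le_norm d e)
    _ ≤ |α| * (‖d‖ * (|α| * ‖d‖)) := by gcongr
    _ = α ^ 2 * ‖d‖ ^ 2 := by rw [← sq_abs α]; ring

theorem popov_main_recursion_general (m : ℕ) (U : Set (EuclideanSpace ℝ (Fin m)))
    (hconv : Convex ℝ U)
    (P : EuclideanSpace ℝ (Fin m) → EuclideanSpace ℝ (Fin m))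
    (hPmem : ∀ v, P v ∈ U)
    (hPmin : ∀ v, ∀ w ∈ U, ‖P v - v‖ ≤ ‖w - v‖)
    (αk : ℝ)
    (uk hk uk1 : EuclideanSpace ℝ (Fin m))
    (Φkm1 Φk : EuclideanSpace ℝ (Fin m))
    (hhk : hk = P (uk - αk • Φkm1)) (huk1 : uk1 = P (uk - αk • Φk)) :
    ∀ y ∈ U,
      ‖uk1 - y‖ ^ 2 ≤ ‖uk - y‖ ^ 2 - ‖uk1 - hk‖ ^ 2 - ‖uk - hk‖ ^ 2
        - 2 * αk * (inner ℝ Φk (hk - y) : ℝ) + 2 * αk ^ 2 * ‖Φk - Φkm1‖ ^ 2 := by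
  intro y hy
  have hP : IsNearestPointMap U P := ⟨hPmem, hPmin⟩
  have step_uk1 := hP.norm_sub_sq_le hconv uk Φk αk hy
  have step_hk := hP.norm_sub_sq_le hconv uk Φkm1 αk (hPmem (uk - αk • Φk))
  rw [← huk1] at step_uk1 step_hk
  rw [← hhk] at step_hk
  have hclose : ‖hk - uk1‖ ≤ |αk| * ‖Φk - Φkm1‖ := by
    calc ‖hk - uk1‖ ≤ ‖(uk - αk • Φkm1) - (uk - αk • Φk)‖ := by
          rw [hhk, huk1]; exact hP.norm_sub_le_norm_sub hconv _ _
      _ = |αk| * ‖Φk - Φkm1‖ := by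
          rw [sub_sub_sub_cancel_left, ← smul_sub, norm_smul, Real.norm_eq_abs]
  have hcross := mul_inner_le_sq_mul_norm_sq hclose
  have hsplit : ⟪Φk, y - uk1⟫ + ⟪Φkm1, uk1 - hk⟫ = -⟪Φk, hk - y⟫ + ⟪Φk - Φkm1, hk - uk1⟫ := by
    simp only [inner_sub_left, inner_sub_right]
    ring
  rw [norm_sub_rev uk1 hk]
  linear_combination step_uk1 + step_hk + 2 * hcross + 2 * αk * hsplit

/-- Main recursion of Lemma 1 for the (stochastic) Popov method. -/
theorem popov_main_recursion (m : ℕ) (U : Set (EuclideanSpace ℝ (Fin m)))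
    (hclosed : IsClosed U) (hconv : Convex ℝ U) (hne : U.Nonempty)
    (P : EuclideanSpace ℝ (Fin m) → EuclideanSpace ℝ (Fin m))
    (hPmem : ∀ v, P v ∈ U)
    (hPmin : ∀ v, ∀ w ∈ U, ‖P v - v‖ ≤ ‖w - v‖)
    (αk : ℝ) (hαk : 0 < αk)
    (uk hkm1 hk uk1 : EuclideanSpace ℝ (Fin m))
    (Φkm1 Φk : EuclideanSpace ℝ (Fin m))
    (huk : uk ∈ U) (hhkm1 : hkm1 ∈ U)
    (hhk : hk = P (uk - αk • Φkm1)) (huk1 : uk1 = P (uk - αk • Φk)) :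
    ∀ y ∈ U,
      ‖uk1 - y‖ ^ 2 ≤ ‖uk - y‖ ^ 2 - ‖uk1 - hk‖ ^ 2 - ‖uk - hk‖ ^ 2
        - 2 * αk * (inner ℝ Φk (hk - y) : ℝ) + 2 * αk ^ 2 * ‖Φk - Φkm1‖ ^ 2 :=
  popov_main_recursion_general m U hconv P hPmem hPmin αk uk hk uk1 Φkm1 Φk hhk huk1
end

section
/- Let F : ℝ^{m+s} → ℝ^{m+s} be given by F(u) = c(u)·(J u + b), where J is the block matrix [[A₁, A₂], [-A₂ᵀ, A₃]] with A₁, A₃ symmetric positive definite (smallest eigenvalues μ_{A₁}, μ_{A₃} > 0), A₂ arbitrary, and c(u) = 1 for ‖u‖ ≤ 10, c(u) = 1/2 for ‖u‖ > 10. Then for every u and every u* with J u* + b = 0: ⟨F(u), u - u*⟩ ≥ (1/2)·min{μ_{A₁}, μ_{A₃}}·‖u - u*‖². In particular F is 2-quasi sharp with μ = (1/2)·min{μ_{A₁}, μ_{A₃}}. -/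
/-! With `z = u - u*` we have `J u + b = J z`. In `⟪J z, z⟫` the off-diagonal blocks
contribute `⟪A₂ z₂, z₁⟫ - ⟪A₂ᵀ z₁, z₂⟫ = 0`, leaving `⟪A₁ z₁, z₁⟫ + ⟪A₃ z₂, z₂⟫ ≥ min μ₁ μ₃ ‖z‖²`.
This is nonnegative, so the factor `c u ≥ 1/2` costs at most a factor `1/2`. -/

open WithLp

section BlockSkew

variable {E F : Type*} [NormedAddCommGroup E] [InnerProductSpace ℝ E]
  [NormedAddCommGroup F] [InnerProductSpace ℝ F]

theorem inner_blockSkew_self {A₁ : E → E} {A₂ : F → E} {A₂t : E → F} {A₃ : F → F}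
    {J : WithLp 2 (E × F) → WithLp 2 (E × F)}
    (hA₂t : ∀ x y, (inner ℝ (A₂ y) x : ℝ) = inner ℝ y (A₂t x))
    (hJ : ∀ x y, J (toLp 2 (x, y)) = toLp 2 (A₁ x + A₂ y, -(A₂t x) + A₃ y))
    (z : WithLp 2 (E × F)) :
    (inner ℝ (J z) z : ℝ) = inner ℝ z.fst (A₁ z.fst) + inner ℝ z.snd (A₃ z.snd) := by
  have hcross : (inner ℝ (A₂ z.snd) z.fst : ℝ) + inner ℝ (-(A₂t z.fst)) z.snd = 0 := by
    rw [hA₂t, inner_neg_left, real_inner_comm]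
    ring
  rw [show J z = _ from hJ z.fst z.snd, prod_inner_apply]
  simp only [ofLp_fst, ofLp_snd, inner_add_left]
  rw [real_inner_comm (A₁ _), real_inner_comm (A₃ _)]
  linarith

theorem min_mul_norm_sq_le_inner_blockSkew {A₁ : E → E} {A₂ : F → E} {A₂t : E → F}
    {A₃ : F → F} {J : WithLp 2 (E × F) → WithLp 2 (E × F)} {μ₁ μ₃ : ℝ}
    (hA₂t : ∀ x y, (inner ℝ (A₂ y) x : ℝ) = inner ℝ y (A₂t x))
    (hA₁pos : ∀ x, μ₁ * ‖x‖ ^ 2 ≤ (inner ℝ x (A₁ x) : ℝ))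
    (hA₃pos : ∀ y, μ₃ * ‖y‖ ^ 2 ≤ (inner ℝ y (A₃ y) : ℝ))
    (hJ : ∀ x y, J (toLp 2 (x, y)) = toLp 2 (A₁ x + A₂ y, -(A₂t x) + A₃ y))
    (z : WithLp 2 (E × F)) :
    min μ₁ μ₃ * ‖z‖ ^ 2 ≤ (inner ℝ (J z) z : ℝ) := by
  rw [inner_blockSkew_self hA₂t hJ, prod_norm_sq_eq_of_L2]
  have h₁ := mul_le_mul_of_nonneg_right (min_le_left μ₁ μ₃) (sq_nonneg ‖z.fst‖)
  have h₃ := mul_le_mul_of_nonneg_right (min_le_right μ₁ μ₃) (sq_nonneg ‖z.snd‖)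
  linarith [hA₁pos z.fst, hA₃pos z.snd]

end BlockSkew

theorem saddle_operator_two_quasi_sharp_general (m s : ℕ)
    (A₁ : EuclideanSpace ℝ (Fin m) →ₗ[ℝ] EuclideanSpace ℝ (Fin m))
    (A₂ : EuclideanSpace ℝ (Fin s) →ₗ[ℝ] EuclideanSpace ℝ (Fin m))
    (A₂t : EuclideanSpace ℝ (Fin m) →ₗ[ℝ] EuclideanSpace ℝ (Fin s))
    (A₃ : EuclideanSpace ℝ (Fin s) →ₗ[ℝ] EuclideanSpace ℝ (Fin s))
    (μ₁ μ₃ : ℝ) (hμ₁ : 0 < μ₁) (hμ₃ : 0 < μ₃)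
    (hA₂t : ∀ x y, (inner ℝ (A₂ y) x : ℝ) = inner ℝ y (A₂t x))
    (hA₁pos : ∀ x, μ₁ * ‖x‖ ^ 2 ≤ (inner ℝ x (A₁ x) : ℝ))
    (hA₃pos : ∀ y, μ₃ * ‖y‖ ^ 2 ≤ (inner ℝ y (A₃ y) : ℝ))
    (J : WithLp 2 (EuclideanSpace ℝ (Fin m) × EuclideanSpace ℝ (Fin s)) →ₗ[ℝ]
         WithLp 2 (EuclideanSpace ℝ (Fin m) × EuclideanSpace ℝ (Fin s)))
    (bvec : WithLp 2 (EuclideanSpace ℝ (Fin m) × EuclideanSpace ℝ (Fin s)))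
    (c : WithLp 2 (EuclideanSpace ℝ (Fin m) × EuclideanSpace ℝ (Fin s)) → ℝ)
    (F : WithLp 2 (EuclideanSpace ℝ (Fin m) × EuclideanSpace ℝ (Fin s)) →
         WithLp 2 (EuclideanSpace ℝ (Fin m) × EuclideanSpace ℝ (Fin s)))
    (hJ : ∀ x y, J ((WithLp.equiv 2 _).symm (x, y)) =
        (WithLp.equiv 2 _).symm (A₁ x + A₂ y, -(A₂t x) + A₃ y))
    (hcdef : ∀ u, c u = if ‖u‖ ≤ 10 then 1 else 1 / 2)
    (hFdef : ∀ u, F u = c u • (J u + bvec)) :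
    ∀ u ustar, J ustar + bvec = 0 →
      (1 / 2) * min μ₁ μ₃ * ‖u - ustar‖ ^ 2 ≤ (inner ℝ (F u) (u - ustar) : ℝ) := by
  intro u ustar hstar
  have hshift : J u + bvec = J (u - ustar) := by
    rw [map_sub, ← sub_eq_zero, ← hstar]
    abel
  have hcoercive := min_mul_norm_sq_le_inner_blockSkew hA₂t hA₁pos hA₃pos hJ (u - ustar)
  have hnonneg : 0 ≤ min μ₁ μ₃ * ‖u - ustar‖ ^ 2 := by positivity
  have hc : 1 / 2 ≤ c u := by
    rw [hcdef]
    split_ifs <;> norm_num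
  calc (1 / 2) * min μ₁ μ₃ * ‖u - ustar‖ ^ 2
      ≤ 1 / 2 * inner ℝ (J (u - ustar)) (u - ustar) := by linarith
    _ ≤ c u * inner ℝ (J (u - ustar)) (u - ustar) := by gcongr; linarith
    _ = inner ℝ (F u) (u - ustar) := by rw [hFdef, hshift, real_inner_smul_left]

/-- The saddle-point operator `F(u) = c(u)(Ju + b)` with block matrix
`J = [[A₁, A₂], [-A₂ᵀ, A₃]]`, `A₁, A₃` symmetric positive definite with smallest
eigenvalues `μ₁, μ₃ > 0`, is `2`-quasi sharp with constant `μ = min{μ₁, μ₃} / 2`. -/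
theorem saddle_operator_two_quasi_sharp (m s : ℕ)
    (A₁ : EuclideanSpace ℝ (Fin m) →ₗ[ℝ] EuclideanSpace ℝ (Fin m))
    (A₂ : EuclideanSpace ℝ (Fin s) →ₗ[ℝ] EuclideanSpace ℝ (Fin m))
    (A₂t : EuclideanSpace ℝ (Fin m) →ₗ[ℝ] EuclideanSpace ℝ (Fin s))
    (A₃ : EuclideanSpace ℝ (Fin s) →ₗ[ℝ] EuclideanSpace ℝ (Fin s))
    (μ₁ μ₃ : ℝ) (hμ₁ : 0 < μ₁) (hμ₃ : 0 < μ₃)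
    (hA₁sym : ∀ x x', (inner ℝ (A₁ x) x' : ℝ) = inner ℝ x (A₁ x'))
    (hA₃sym : ∀ y y', (inner ℝ (A₃ y) y' : ℝ) = inner ℝ y (A₃ y'))
    (hA₂t : ∀ x y, (inner ℝ (A₂ y) x : ℝ) = inner ℝ y (A₂t x))
    (hA₁pos : ∀ x, μ₁ * ‖x‖ ^ 2 ≤ (inner ℝ x (A₁ x) : ℝ))
    (hA₃pos : ∀ y, μ₃ * ‖y‖ ^ 2 ≤ (inner ℝ y (A₃ y) : ℝ))
    (J : WithLp 2 (EuclideanSpace ℝ (Fin m) × EuclideanSpace ℝ (Fin s)) →ₗ[ℝ]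
         WithLp 2 (EuclideanSpace ℝ (Fin m) × EuclideanSpace ℝ (Fin s)))
    (bvec : WithLp 2 (EuclideanSpace ℝ (Fin m) × EuclideanSpace ℝ (Fin s)))
    (c : WithLp 2 (EuclideanSpace ℝ (Fin m) × EuclideanSpace ℝ (Fin s)) → ℝ)
    (F : WithLp 2 (EuclideanSpace ℝ (Fin m) × EuclideanSpace ℝ (Fin s)) →
         WithLp 2 (EuclideanSpace ℝ (Fin m) × EuclideanSpace ℝ (Fin s)))
    (hJ : ∀ x y, J ((WithLp.equiv 2 _).symm (x, y)) =
        (WithLp.equiv 2 _).symm (A₁ x + A₂ y, -(A₂t x) + A₃ y))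
    (hcdef : ∀ u, c u = if ‖u‖ ≤ 10 then 1 else 1 / 2)
    (hFdef : ∀ u, F u = c u • (J u + bvec)) :
    ∀ u ustar, J ustar + bvec = 0 →
      (1 / 2) * min μ₁ μ₃ * ‖u - ustar‖ ^ 2 ≤ (inner ℝ (F u) (u - ustar) : ℝ) :=
  saddle_operator_two_quasi_sharp_general m s A₁ A₂ A₂t A₃ μ₁ μ₃ hμ₁ hμ₃ hA₂t hA₁pos hA₃pos J bvec c
    F hJ hcdef hFdef
end
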